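/- The polynomial complex RT ⊂ P_{k+1}(K;ℝ²) →(sym curl) P_k(K;S) →(div div) P_{k−2}(K) → 0 is exact for k ≥ 3; in particular sym curl maps P_{k+1}(K;ℝ²) onto the kernel of div div in P_k(K;S), div div maps P_k(K;S) onto P_{k−2}(K), and the kernel of sym curl in P_{k+1}(K;ℝ²) equals the lowest-order Raviart–Thomas space RT. -/

import Mathlib

/-!
Everything is checked on coefficients in the monomial basis, using that partial derivatives
commute and the partial antiderivative `∫ᵢ`, a right inverse of `∂ᵢ` that commutes with `∂ⱼ`
for `j ≠ i` and raises the degree by at most one.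

If `sym curl (p₁, p₂) = 0`, then `∂ₓp₁ = ∂ᵧp₂` has vanishing gradient, hence is a constant `c`,
and `p = (a, b) + c (x, y)`. Given `τ` with `div div τ = 0`, integrating `τ₁₁` in `y` and `τ₂₂`
in `x` matches the diagonal; the defect `h` left in the off-diagonal satisfies
`∂ₓ∂ᵧ h = div div τ = 0`, so `h = f + g` with `∂ᵧ f = 0 = ∂ₓ g`, and adding `(∫ₓ f, -∫ᵧ g)`
corrects it. Finally `div div (∫ₓ∫ₓ q, 0, 0) = q`.
-/

open Finsupp

theorem Finsupp.sum_add_single_one {σ : Type*} (m : σ →₀ ℕ) (i : σ) :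
    ((m + single i 1).sum fun _ e => e) = (m.sum fun _ e => e) + 1 := by
  change (m + single i 1).degree = m.degree + 1
  rw [map_add, degree_single]

namespace MvPolynomial

section Derivative

variable {R σ : Type*} [CommSemiring R]

theorem pderiv_pderiv_comm (i j : σ) (p : MvPolynomial σ R) :
    pderiv i (pderiv j p) = pderiv j (pderiv i p) := by
  classical
  rcases eq_or_ne i j with rfl | hij
  · rfl
  ext n
  simp only [coeff_pderiv, Finsupp.add_apply, single_apply, hij, hij.symm, if_false, add_zero,
    add_right_comm n]
  ring

theorem totalDegree_pderiv_le (i : σ) (p : MvPolynomial σ R) :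
    (pderiv i p).totalDegree ≤ p.totalDegree - 1 := by
  refine Finset.sup_le fun m hm => ?_
  rw [mem_support_iff, coeff_pderiv] at hm
  have := le_totalDegree (mem_support_iff.2 (left_ne_zero_of_mul hm))
  rw [sum_add_single_one] at this
  omega

variable [NoZeroDivisors R] [CharZero R]

theorem coeff_pderiv_eq_zero_iff {i : σ} {p : MvPolynomial σ R} {m : σ →₀ ℕ} :
    coeff m (pderiv i p) = 0 ↔ coeff (m + single i 1) p = 0 := by
  rw [coeff_pderiv, mul_eq_zero, or_iff_left (Nat.cast_add_one_ne_zero _)]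

theorem coeff_eq_zero_of_pderiv_eq_zero {i : σ} {p : MvPolynomial σ R} (h : pderiv i p = 0)
    {m : σ →₀ ℕ} (hm : m i ≠ 0) : coeff m p = 0 := by
  rw [← sub_add_single_one_cancel hm, ← coeff_pderiv_eq_zero_iff, h, coeff_zero]

theorem eq_C_of_pderiv_eq_zero {p : MvPolynomial σ R} (h : ∀ i, pderiv i p = 0) :
    p = C (coeff 0 p) := by
  classical
  ext m
  rw [coeff_C]
  split_ifs with hm
  · rw [hm]
  · obtain ⟨i, hi⟩ := Finsupp.ne_iff.1 (Ne.symm hm)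
    exact coeff_eq_zero_of_pderiv_eq_zero (h i) hi

end Derivative

section Ring

variable {R σ : Type*} [CommRing R] [NoZeroDivisors R] [CharZero R]

theorem eq_C_add_C_mul_X_of_pderiv {p : MvPolynomial σ R} {i : σ} {c : R}
    (hi : pderiv i p = C c) (h : ∀ j ≠ i, pderiv j p = 0) :
    p = C (coeff 0 p) + C c * X i := by
  have key := eq_C_of_pderiv_eq_zero (p := p - C c * X i) fun j => by
    rcases eq_or_ne j i with rfl | hj
    · simp [hi]
    · simp [h j hj, pderiv_X_of_ne hj.symm]
  rw [sub_eq_iff_eq_add] at key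
  simpa using key

end Ring

section Antiderivative

variable {K σ : Type*} [Field K]

/-- The antiderivative in `X i`, normalised to vanish on `X i = 0`. -/
noncomputable def antideriv (i : σ) (p : MvPolynomial σ K) : MvPolynomial σ K :=
  ∑ m ∈ p.support, monomial (m + single i 1) (coeff m p / (m i + 1))

@[simp]
theorem antideriv_zero (i : σ) : antideriv i (0 : MvPolynomial σ K) = 0 := by
  simp [antideriv]

theorem coeff_add_single_antideriv (i : σ) (p : MvPolynomial σ K) (m : σ →₀ ℕ) :
    coeff (m + single i 1) (antideriv i p) = coeff m p / (m i + 1) := by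
  classical
  simp only [antideriv, coeff_sum, coeff_monomial, add_left_inj]
  rw [Finset.sum_ite_eq']
  split_ifs with hm
  · rfl
  · rw [notMem_support_iff.1 hm, zero_div]

theorem coeff_antideriv_of_eq_zero {i : σ} (p : MvPolynomial σ K) {m : σ →₀ ℕ} (hm : m i = 0) :
    coeff m (antideriv i p) = 0 := by
  classical
  rw [antideriv, coeff_sum]
  refine Finset.sum_eq_zero fun n _ => ?_
  rw [coeff_monomial, if_neg]
  rintro rfl
  simp at hm

theorem pderiv_antideriv_of_ne {i j : σ} (hij : i ≠ j) (p : MvPolynomial σ K) :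
    pderiv j (antideriv i p) = antideriv i (pderiv j p) := by
  classical
  ext m
  rcases eq_or_ne (m i) 0 with hm | hm
  · rw [coeff_pderiv, coeff_antideriv_of_eq_zero, coeff_antideriv_of_eq_zero _ hm, zero_mul]
    simp [hm, hij]
  · rw [← sub_add_single_one_cancel hm, coeff_pderiv, add_right_comm, coeff_add_single_antideriv,
      coeff_add_single_antideriv, coeff_pderiv]
    simp only [Finsupp.add_apply, single_apply, hij, hij.symm, if_false, add_zero]
    ring

theorem totalDegree_antideriv_le (i : σ) (p : MvPolynomial σ K) :
    (antideriv i p).totalDegree ≤ p.totalDegree + 1 := by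
  refine Finset.sup_le fun m hm => ?_
  rw [mem_support_iff] at hm
  have hmi : m i ≠ 0 := fun h => hm (coeff_antideriv_of_eq_zero p h)
  rw [← sub_add_single_one_cancel hmi, coeff_add_single_antideriv] at hm
  rw [← sub_add_single_one_cancel hmi, sum_add_single_one]
  exact Nat.add_le_add_right (le_totalDegree (mem_support_iff.2 (div_ne_zero_iff.1 hm).1)) 1

variable [CharZero K]

@[simp]
theorem pderiv_antideriv (i : σ) (p : MvPolynomial σ K) : pderiv i (antideriv i p) = p := by
  ext m
  rw [coeff_pderiv, coeff_add_single_antideriv, div_mul_cancel₀ _ (Nat.cast_add_one_ne_zero _)]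

theorem coeff_antideriv_pderiv (i : σ) (p : MvPolynomial σ K) (m : σ →₀ ℕ) :
    coeff m (antideriv i (pderiv i p)) = if m i = 0 then 0 else coeff m p := by
  split_ifs with hm
  · exact coeff_antideriv_of_eq_zero _ hm
  · rw [← sub_add_single_one_cancel hm, coeff_add_single_antideriv, coeff_pderiv,
      mul_div_cancel_right₀ _ (Nat.cast_add_one_ne_zero _)]

theorem totalDegree_antideriv_pderiv_le (i : σ) (p : MvPolynomial σ K) :
    (antideriv i (pderiv i p)).totalDegree ≤ p.totalDegree := by
  refine totalDegree_le_of_support_subset fun m hm => ?_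
  rw [mem_support_iff, coeff_antideriv_pderiv] at hm
  rw [mem_support_iff]
  split_ifs at hm
  · exact absurd rfl hm
  · exact hm

theorem exists_add_of_pderiv_pderiv_eq_zero {i j : σ} (hij : i ≠ j) {p : MvPolynomial σ K}
    (h : pderiv i (pderiv j p) = 0) :
    ∃ f g : MvPolynomial σ K, pderiv j f = 0 ∧ pderiv i g = 0 ∧ f + g = p ∧
      f.totalDegree ≤ p.totalDegree ∧ g.totalDegree ≤ p.totalDegree := by
  refine ⟨p - antideriv j (pderiv j p), antideriv j (pderiv j p), by simp, ?_, sub_add_cancel _ _,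
    (totalDegree_sub _ _).trans (max_le le_rfl (totalDegree_antideriv_pderiv_le _ _)),
    totalDegree_antideriv_pderiv_le _ _⟩
  rw [pderiv_antideriv_of_ne hij.symm, h, antideriv_zero]

end Antiderivative

end MvPolynomial

open MvPolynomial

section SymCurl

variable {K : Type*} [Field K]

/-- A symmetric matrix `τ` is stored as its entries `(τ₁₁, τ₁₂, τ₂₂)`. -/
noncomputable def symCurl (p₁ p₂ : MvPolynomial (Fin 2) K) :
    MvPolynomial (Fin 2) K × MvPolynomial (Fin 2) K × MvPolynomial (Fin 2) K :=
  (-pderiv 1 p₁, (1 / 2 : K) • (pderiv 0 p₁ - pderiv 1 p₂), pderiv 0 p₂)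

noncomputable def divDiv
    (τ : MvPolynomial (Fin 2) K × MvPolynomial (Fin 2) K × MvPolynomial (Fin 2) K) :
    MvPolynomial (Fin 2) K :=
  pderiv 0 (pderiv 0 τ.1) + 2 * pderiv 0 (pderiv 1 τ.2.1) + pderiv 1 (pderiv 1 τ.2.2)

variable [CharZero K]

theorem divDiv_symCurl (p₁ p₂ : MvPolynomial (Fin 2) K) : divDiv (symCurl p₁ p₂) = 0 := by
  simp only [divDiv, symCurl, map_neg, Derivation.map_smul, two_mul, ← add_smul, add_halves,
    one_smul, map_sub]
  rw [pderiv_pderiv_comm 1 0 p₁, pderiv_pderiv_comm 1 0 p₂, pderiv_pderiv_comm 1 0 (pderiv 1 p₂)]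
  abel

theorem symCurl_eq_zero_iff {p₁ p₂ : MvPolynomial (Fin 2) K} :
    symCurl p₁ p₂ = 0 ↔ ∃ a b c : K, p₁ = C a + C c * X 0 ∧ p₂ = C b + C c * X 1 := by
  constructor
  · intro h
    simp only [symCurl, Prod.mk_eq_zero, neg_eq_zero, smul_eq_zero, one_div, inv_eq_zero,
      two_ne_zero, false_or, sub_eq_zero] at h
    obtain ⟨h₁, h₁₂, h₂⟩ := h
    have hc : pderiv 0 p₁ = C (coeff 0 (pderiv 0 p₁)) := eq_C_of_pderiv_eq_zero <|
      Fin.forall_fin_two.2 ⟨by rw [h₁₂, pderiv_pderiv_comm, h₂, map_zero],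
        by rw [pderiv_pderiv_comm, h₁, map_zero]⟩
    exact ⟨_, _, _,
      eq_C_add_C_mul_X_of_pderiv hc (Fin.forall_fin_two.2 ⟨fun h => absurd rfl h, fun _ => h₁⟩),
      eq_C_add_C_mul_X_of_pderiv (h₁₂ ▸ hc)
        (Fin.forall_fin_two.2 ⟨fun _ => h₂, fun h => absurd rfl h⟩)⟩
  · rintro ⟨a, b, c, rfl, rfl⟩
    simp [symCurl]

theorem exists_divDiv_eq (q : MvPolynomial (Fin 2) K) :
    ∃ s₁₁ s₁₂ s₂₂ : MvPolynomial (Fin 2) K, s₁₁.totalDegree ≤ q.totalDegree + 2 ∧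
      s₁₂.totalDegree ≤ q.totalDegree + 2 ∧ s₂₂.totalDegree ≤ q.totalDegree + 2 ∧
      divDiv (s₁₁, s₁₂, s₂₂) = q :=
  ⟨antideriv 0 (antideriv 0 q), 0, 0,
    (totalDegree_antideriv_le _ _).trans (Nat.add_le_add_right (totalDegree_antideriv_le _ _) 1),
    by simp, by simp, by simp [divDiv]⟩

theorem exists_symCurl_eq_of_divDiv_eq_zero {k : ℕ} {s₁₁ s₁₂ s₂₂ : MvPolynomial (Fin 2) K}
    (h₁₁ : s₁₁.totalDegree ≤ k) (h₁₂ : s₁₂.totalDegree ≤ k) (h₂₂ : s₂₂.totalDegree ≤ k)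
    (hdiv : divDiv (s₁₁, s₁₂, s₂₂) = 0) :
    ∃ p₁ p₂ : MvPolynomial (Fin 2) K, p₁.totalDegree ≤ k + 1 ∧ p₂.totalDegree ≤ k + 1 ∧
      symCurl p₁ p₂ = (s₁₁, s₁₂, s₂₂) := by
  obtain ⟨u, hu, hu_deg⟩ :
      ∃ u : MvPolynomial (Fin 2) K, pderiv 1 u = -s₁₁ ∧ u.totalDegree ≤ k + 1 :=
    ⟨-antideriv 1 s₁₁, by simp,
      by rw [totalDegree_neg]; exact (totalDegree_antideriv_le _ _).trans (by omega)⟩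
  obtain ⟨v, hv, hv_deg⟩ :
      ∃ v : MvPolynomial (Fin 2) K, pderiv 0 v = s₂₂ ∧ v.totalDegree ≤ k + 1 :=
    ⟨antideriv 0 s₂₂, by simp, (totalDegree_antideriv_le _ _).trans (by omega)⟩
  have hh : pderiv 0 (pderiv 1 ((2 : K) • s₁₂ - pderiv 0 u + pderiv 1 v)) = 0 := by
    rw [← hdiv]
    simp only [divDiv, map_add, map_sub, two_smul, two_mul]
    rw [pderiv_pderiv_comm 1 0 u, pderiv_pderiv_comm 0 1 (pderiv 1 v), pderiv_pderiv_comm 0 1 v,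
      hu, hv, map_neg, map_neg]
    abel
  have hh_deg : ((2 : K) • s₁₂ - pderiv 0 u + pderiv 1 v).totalDegree ≤ k := by
    refine (totalDegree_add _ _).trans (max_le ((totalDegree_sub _ _).trans (max_le ?_ ?_)) ?_)
    · exact (totalDegree_smul_le _ _).trans h₁₂
    · exact (totalDegree_pderiv_le _ _).trans (by omega)
    · exact (totalDegree_pderiv_le _ _).trans (by omega)
  obtain ⟨f, g, hf, hg, hfg, hf_deg, hg_deg⟩ :=
    exists_add_of_pderiv_pderiv_eq_zero (i := 0) (j := 1) (by decide) hh
  refine ⟨u + antideriv 0 f, v - antideriv 1 g,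
    (totalDegree_add _ _).trans (max_le hu_deg ((totalDegree_antideriv_le _ _).trans (by omega))),
    (totalDegree_sub _ _).trans (max_le hv_deg ((totalDegree_antideriv_le _ _).trans (by omega))),
    ?_⟩
  simp only [symCurl, Prod.mk.injEq]
  refine ⟨?_, ?_, ?_⟩
  · rw [map_add, hu, pderiv_antideriv_of_ne (by decide), hf, antideriv_zero, add_zero, neg_neg]
  · rw [map_add, map_sub, pderiv_antideriv, pderiv_antideriv,
      show pderiv 0 u + f - (pderiv 1 v - g) = (2 : K) • s₁₂ by linear_combination hfg,
      smul_smul]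
    norm_num
  · rw [map_sub, hv, pderiv_antideriv_of_ne (by decide), hg, antideriv_zero, sub_zero]

end SymCurl

/-- For `k ≥ 3`, the polynomial complex
`RT ⊂ P_{k+1}(K;ℝ²) →(sym curl) P_k(K;S) →(div div) P_{k−2}(K) → 0` is exact:
the kernel of `sym curl` in `P_{k+1}(K;ℝ²)` is the lowest-order Raviart–Thomas space
`RT`, the composition `div div ∘ sym curl` vanishes, `sym curl` maps `P_{k+1}(K;ℝ²)`
onto the kernel of `div div` in `P_k(K;S)`, and `div div` maps `P_k(K;S)` onto
`P_{k−2}(K)`. Here `sym curl (p₁,p₂) = [[−∂ᵧp₁, (∂ₓp₁−∂ᵧp₂)/2], [(∂ₓp₁−∂ᵧp₂)/2, ∂ₓp₂]]`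
and `div div (s₁₁,s₁₂,s₂₂) = ∂ₓₓs₁₁ + 2∂ₓᵧs₁₂ + ∂ᵧᵧs₂₂`. -/
theorem polynomial_divdiv_complex_exact (k : ℕ) (hk : 3 ≤ k) :
    (∀ p₁ p₂ : MvPolynomial (Fin 2) ℝ, p₁.totalDegree ≤ k + 1 → p₂.totalDegree ≤ k + 1 →
      ((-(pderiv 1 p₁) = 0 ∧ (1 / 2 : ℝ) • (pderiv 0 p₁ - pderiv 1 p₂) = 0 ∧
          pderiv 0 p₂ = 0)
        ↔ ∃ a b c : ℝ, p₁ = C a + C c * X 0 ∧ p₂ = C b + C c * X 1)) ∧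
    (∀ p₁ p₂ : MvPolynomial (Fin 2) ℝ,
      pderiv 0 (pderiv 0 (-(pderiv 1 p₁))) +
        2 * pderiv 0 (pderiv 1 ((1 / 2 : ℝ) • (pderiv 0 p₁ - pderiv 1 p₂))) +
        pderiv 1 (pderiv 1 (pderiv 0 p₂)) = 0) ∧
    (∀ s₁₁ s₁₂ s₂₂ : MvPolynomial (Fin 2) ℝ, s₁₁.totalDegree ≤ k → s₁₂.totalDegree ≤ k →
      s₂₂.totalDegree ≤ k →
      pderiv 0 (pderiv 0 s₁₁) + 2 * pderiv 0 (pderiv 1 s₁₂) +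
        pderiv 1 (pderiv 1 s₂₂) = 0 →
      ∃ p₁ p₂ : MvPolynomial (Fin 2) ℝ, p₁.totalDegree ≤ k + 1 ∧ p₂.totalDegree ≤ k + 1 ∧
        s₁₁ = -(pderiv 1 p₁) ∧ s₁₂ = (1 / 2 : ℝ) • (pderiv 0 p₁ - pderiv 1 p₂) ∧
        s₂₂ = pderiv 0 p₂) ∧
    (∀ q : MvPolynomial (Fin 2) ℝ, q.totalDegree ≤ k - 2 →
      ∃ s₁₁ s₁₂ s₂₂ : MvPolynomial (Fin 2) ℝ, s₁₁.totalDegree ≤ k ∧ s₁₂.totalDegree ≤ k ∧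
        s₂₂.totalDegree ≤ k ∧
        pderiv 0 (pderiv 0 s₁₁) + 2 * pderiv 0 (pderiv 1 s₁₂) +
          pderiv 1 (pderiv 1 s₂₂) = q) := by
  refine ⟨fun p₁ p₂ _ _ => ?_, divDiv_symCurl, fun s₁₁ s₁₂ s₂₂ h₁₁ h₁₂ h₂₂ hdiv => ?_,
    fun q hq => ?_⟩
  · rw [← symCurl_eq_zero_iff]
    simp only [symCurl, Prod.mk_eq_zero]
  · obtain ⟨p₁, p₂, hp₁, hp₂, hcurl⟩ := exists_symCurl_eq_of_divDiv_eq_zero h₁₁ h₁₂ h₂₂ hdiv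
    simp only [symCurl, Prod.mk.injEq] at hcurl
    exact ⟨p₁, p₂, hp₁, hp₂, hcurl.1.symm, hcurl.2.1.symm, hcurl.2.2.symm⟩
  · obtain ⟨s₁₁, s₁₂, s₂₂, h₁₁, h₁₂, h₂₂, hq⟩ := exists_divDiv_eq q
    exact ⟨s₁₁, s₁₂, s₂₂, by omega, by omega, by omega, hq⟩
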